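/- Gluing lemma for ∀-free sentences: let V be a Gödel set, I a V-interpretation, and ω ∈ [0,1) a fixed value. Define the interpretation I_ω on atomic sentences by I_ω(P)=I(P) if I(P)≤ω and I_ω(P)=1 otherwise (same domain and function interpretations). Then I_ω is a V-interpretation, and for every sentence B (with parameters from the domain) that contains no universal quantifier, I_ω(B)=I(B) if I(B)≤ω and I_ω(B)=1 otherwise. -/

import Mathlib

namespace GodelPaper

/-- A first-order language: function and relation symbols of each arity. -/
structure Lang where
  Func : ℕ → Type
  Rel : ℕ → Type

/-- A Gödel set: a closed subset of [0,1] containing 0 and 1. -/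
def GodelSet (V : Set ℝ) : Prop :=
  IsClosed V ∧ V ⊆ Set.Icc 0 1 ∧ (0:ℝ) ∈ V ∧ (1:ℝ) ∈ V

/-- Terms with variables from `α`. -/
inductive Term (L : Lang) (α : Type) : Type
  | var : α → Term L α
  | func : ∀ {k}, L.Func k → (Fin k → Term L α) → Term L α

/-- A `V`-interpretation: nonempty domain, interpretation of function symbols,
and truth values in `V` for atomic sentences with parameters. -/
structure Interp (L : Lang) (V : Set ℝ) where
  Dom : Type
  dom_nonempty : Nonempty Dom
  funMap : ∀ {k}, L.Func k → (Fin k → Dom) → Dom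
  relVal : ∀ {k}, L.Rel k → (Fin k → Dom) → ℝ
  relVal_mem : ∀ {k} (R : L.Rel k) (v : Fin k → Dom), relVal R v ∈ V

def Term.eval {L : Lang} {V : Set ℝ} (I : Interp L V) {α : Type} (v : α → I.Dom) :
    Term L α → I.Dom
  | .var i => v i
  | .func f ts => I.funMap f fun j => Term.eval I v (ts j)

/-- Formulas of the Δ-extended language, with free variables among `Fin n`.
The quantifiers bind the *last* variable. Δ-free formulas (i.e. formulas of the
plain language) are singled out by the predicate `DeltaFree` below. -/
inductive Form (L : Lang) : ℕ → Type
  | falsum : ∀ {n}, Form L n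
  | atom : ∀ {n k}, L.Rel k → (Fin k → Term L (Fin n)) → Form L n
  | conj : ∀ {n}, Form L n → Form L n → Form L n
  | disj : ∀ {n}, Form L n → Form L n → Form L n
  | impl : ∀ {n}, Form L n → Form L n → Form L n
  | delta : ∀ {n}, Form L n → Form L n
  | all : ∀ {n}, Form L (n+1) → Form L n
  | ex : ∀ {n}, Form L (n+1) → Form L n

/-- The Gödel truth value of a formula under an interpretation and an
assignment of the free variables. -/
noncomputable def Form.val {L : Lang} {V : Set ℝ} (I : Interp L V) :
    ∀ {n}, Form L n → (Fin n → I.Dom) → ℝ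
  | _, .falsum, _ => 0
  | _, .atom R ts, ρ => I.relVal R fun j => Term.eval I ρ (ts j)
  | _, .conj A B, ρ => min (Form.val I A ρ) (Form.val I B ρ)
  | _, .disj A B, ρ => max (Form.val I A ρ) (Form.val I B ρ)
  | _, .impl A B, ρ => if Form.val I A ρ ≤ Form.val I B ρ then 1 else Form.val I B ρ
  | _, .delta A, ρ => if Form.val I A ρ = 1 then 1 else 0
  | _, .all A, ρ => sInf {v : ℝ | ∃ d : I.Dom, v = Form.val I A (Fin.snoc ρ d)}
  | _, .ex A, ρ => sSup {v : ℝ | ∃ d : I.Dom, v = Form.val I A (Fin.snoc ρ d)}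

/-- The value of a sentence. -/
noncomputable def Form.sval {L : Lang} {V : Set ℝ} (I : Interp L V) (A : Form L 0) : ℝ :=
  Form.val I A Fin.elim0

/-- `A` is valid in `G_V`. -/
def Valid {L : Lang} (V : Set ℝ) (A : Form L 0) : Prop :=
  ∀ I : Interp L V, Form.sval I A = 1

/-- `A` is 1-satisfiable in `G_V`. -/
def OneSat {L : Lang} (V : Set ℝ) (A : Form L 0) : Prop :=
  ∃ I : Interp L V, Form.sval I A = 1

/-- `A` is classically satisfiable: it takes value 1 under a `V`-interpretation
assigning only values in {0,1} to atomic sentences. -/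
def ClassSat {L : Lang} (V : Set ℝ) (A : Form L 0) : Prop :=
  ∃ I : Interp L V,
    (∀ {k : ℕ} (R : L.Rel k) (v : Fin k → I.Dom), I.relVal R v = 0 ∨ I.relVal R v = 1) ∧
    Form.sval I A = 1

/-- ¬A abbreviates A ⊃ ⊥. -/
def Form.not {L : Lang} {n : ℕ} (A : Form L n) : Form L n := Form.impl A Form.falsum

/-- A ↔ B abbreviates (A ⊃ B) ∧ (B ⊃ A). -/
def Form.iff {L : Lang} {n : ℕ} (A B : Form L n) : Form L n :=
  Form.conj (Form.impl A B) (Form.impl B A)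

/-- Formulas of the plain language (no Δ). -/
def DeltaFree {L : Lang} : ∀ {n}, Form L n → Prop
  | _, .falsum => True
  | _, .atom _ _ => True
  | _, .conj A B => DeltaFree A ∧ DeltaFree B
  | _, .disj A B => DeltaFree A ∧ DeltaFree B
  | _, .impl A B => DeltaFree A ∧ DeltaFree B
  | _, .delta _ => False
  | _, .all A => DeltaFree A
  | _, .ex A => DeltaFree A

/-- Quantifier-free formulas. -/
def QuantFree {L : Lang} : ∀ {n}, Form L n → Prop
  | _, .falsum => True
  | _, .atom _ _ => True
  | _, .conj A B => QuantFree A ∧ QuantFree B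
  | _, .disj A B => QuantFree A ∧ QuantFree B
  | _, .impl A B => QuantFree A ∧ QuantFree B
  | _, .delta A => QuantFree A
  | _, .all _ => False
  | _, .ex _ => False

/-- Formulas containing no universal quantifier. -/
def AllFree {L : Lang} : ∀ {n}, Form L n → Prop
  | _, .falsum => True
  | _, .atom _ _ => True
  | _, .conj A B => AllFree A ∧ AllFree B
  | _, .disj A B => AllFree A ∧ AllFree B
  | _, .impl A B => AllFree A ∧ AllFree B
  | _, .delta A => AllFree A
  | _, .all _ => False
  | _, .ex A => AllFree A

/-- Prenex formulas: a block of quantifiers followed by a quantifier-free matrix. -/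
inductive IsPrenex {L : Lang} : ∀ {n}, Form L n → Prop
  | qf {n} {A : Form L n} : QuantFree A → IsPrenex A
  | all {n} {A : Form L (n+1)} : IsPrenex A → IsPrenex (Form.all A)
  | ex {n} {A : Form L (n+1)} : IsPrenex A → IsPrenex (Form.ex A)

/-- Purely existential prenex formulas. -/
inductive ExPrenex {L : Lang} : ∀ {n}, Form L n → Prop
  | qf {n} {A : Form L n} : QuantFree A → ExPrenex A
  | ex {n} {A : Form L (n+1)} : ExPrenex A → ExPrenex (Form.ex A)

/-- The glued interpretation `I_ω`: atoms with value ≤ ω keep their value,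
all other atoms get value 1. Same domain and function interpretations. -/
noncomputable def Interp.glue {L : Lang} {V : Set ℝ} (I : Interp L V) (ω : ℝ)
    (h1 : (1:ℝ) ∈ V) : Interp L V where
  Dom := I.Dom
  dom_nonempty := I.dom_nonempty
  funMap := fun {k} f v => I.funMap f v
  relVal := fun {k} R v => if I.relVal R v ≤ ω then I.relVal R v else 1
  relVal_mem := fun {k} R v => by
    by_cases h : I.relVal R v ≤ ω
    · simpa [h] using I.relVal_mem R v
    · simpa [h] using h1

/-- The Gödel set `V_↑ = {1 - 1/k : k ≥ 1} ∪ {1}`. -/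
def Vup : Set ℝ := {x : ℝ | ∃ k : ℕ, 1 ≤ k ∧ x = 1 - 1/(k:ℝ)} ∪ {1}

/-- The `m`-element Gödel set `V_m = {1 - 1/k : 1 ≤ k ≤ m-1} ∪ {1}`. -/
def Vfin (m : ℕ) : Set ℝ :=
  {x : ℝ | ∃ k : ℕ, 1 ≤ k ∧ k ≤ m - 1 ∧ x = 1 - 1/(k:ℝ)} ∪ {1}

/-- Atomic formula built from a unary predicate. -/
def atom1 {L : Lang} (P : L.Rel 1) {n : ℕ} (t : Term L (Fin n)) : Form L n :=
  Form.atom P fun _ => t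

/-- Atomic formula built from a 0-ary predicate (propositional atom). -/
def atom0 {L : Lang} (X : L.Rel 0) {n : ℕ} : Form L n :=
  Form.atom X fun i => i.elim0

def Term.rename {L : Lang} {α β : Type} (f : α → β) : Term L α → Term L β
  | .var i => .var (f i)
  | .func g ts => .func g fun j => Term.rename f (ts j)

def Form.rename {L : Lang} : ∀ {m n}, (Fin m → Fin n) → Form L m → Form L n
  | _, _, _, .falsum => .falsum
  | _, _, f, .atom R ts => .atom R fun j => (ts j).rename f
  | _, _, f, .conj A B => .conj (A.rename f) (B.rename f)
  | _, _, f, .disj A B => .disj (A.rename f) (B.rename f)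
  | _, _, f, .impl A B => .impl (A.rename f) (B.rename f)
  | _, _, f, .delta A => .delta (A.rename f)
  | _, _, f, .all A =>
      .all (A.rename (Fin.lastCases (Fin.last _) fun i => Fin.castSucc (f i)))
  | _, _, f, .ex A =>
      .ex (A.rename (Fin.lastCases (Fin.last _) fun i => Fin.castSucc (f i)))

/-- Weakening: regard a formula with `n` free variables as one with `n+1`
free variables (not using the new last variable). -/
def Form.lift {L : Lang} {n : ℕ} (A : Form L n) : Form L (n+1) :=
  A.rename Fin.castSucc

def Term.subst {L : Lang} {α β : Type} (σ : α → Term L β) : Term L α → Term L β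
  | .var i => σ i
  | .func g ts => .func g fun j => Term.subst σ (ts j)

def Form.subst {L : Lang} : ∀ {m n}, (Fin m → Term L (Fin n)) → Form L m → Form L n
  | _, _, _, .falsum => .falsum
  | _, _, σ, .atom R ts => .atom R fun j => (ts j).subst σ
  | _, _, σ, .conj A B => .conj (A.subst σ) (B.subst σ)
  | _, _, σ, .disj A B => .disj (A.subst σ) (B.subst σ)
  | _, _, σ, .impl A B => .impl (A.subst σ) (B.subst σ)
  | _, _, σ, .delta A => .delta (A.subst σ)
  | _, _, σ, .all A =>
      .all (A.subst (Fin.lastCases (.var (Fin.last _))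
        fun i => (σ i).rename Fin.castSucc))
  | _, _, σ, .ex A =>
      .ex (A.subst (Fin.lastCases (.var (Fin.last _))
        fun i => (σ i).rename Fin.castSucc))

/-- The language `L ∪ {f}` with one new function symbol of arity `a`. -/
def Lang.addFunc (L : Lang) (a : ℕ) : Lang where
  Func := fun k => L.Func k ⊕ PLift (k = a)
  Rel := L.Rel

/-- The new function symbol of `L.addFunc a`. -/
def newFunc (L : Lang) (a : ℕ) : (L.addFunc a).Func a := Sum.inr ⟨rfl⟩

def Term.emb {L : Lang} {a : ℕ} {α : Type} : Term L α → Term (L.addFunc a) α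
  | .var i => .var i
  | .func g ts => .func (Sum.inl g) fun j => Term.emb (ts j)

/-- Embedding of `L`-formulas into the language with the extra function symbol. -/
def Form.emb {L : Lang} {a : ℕ} : ∀ {n}, Form L n → Form (L.addFunc a) n
  | _, .falsum => .falsum
  | _, .atom R ts => .atom R fun j => (ts j).emb
  | _, .conj A B => .conj A.emb B.emb
  | _, .disj A B => .disj A.emb B.emb
  | _, .impl A B => .impl A.emb B.emb
  | _, .delta A => .delta A.emb
  | _, .all A => .all A.emb
  | _, .ex A => .ex A.emb

/-- Prefix of `n` existential quantifiers (outermost quantifier binds variable 0). -/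
def Form.exN {L : Lang} : ∀ n, Form L n → Form L 0
  | 0, A => A
  | n+1, A => Form.exN n (Form.ex A)

/-- Prefix of `n` universal quantifiers (outermost quantifier binds variable 0). -/
def Form.allN {L : Lang} : ∀ n, Form L n → Form L 0
  | 0, A => A
  | n+1, A => Form.allN n (Form.all A)

/-! The map `glueVal ω : a ↦ if a ≤ ω then a else 1` is monotone on `(-∞, 1]`, so it commutes
with `min` and `max` on truth values. Since `ω < 1` it sends exactly the values above `ω` to `1`
and fixes the others, which makes it commute with Gödel implication, and with suprema: a supremum
above `ω` is exceeded by some member, which is sent to `1`. Infima and `Δ` are not preserved (an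
infimum `≤ ω` of values `> ω`; a value in `(ω, 1)`), which is why `∀` and `Δ` are excluded. -/

noncomputable def glueVal (ω a : ℝ) : ℝ := if a ≤ ω then a else 1

section glueVal

variable {ω : ℝ}

lemma glueVal_le_one {a : ℝ} (ha : a ≤ 1) : glueVal ω a ≤ 1 := by
  unfold glueVal; split_ifs <;> linarith

lemma monotoneOn_glueVal : MonotoneOn (glueVal ω) (Set.Iic 1) := by
  intro a ha b _ hab
  unfold glueVal; split_ifs <;> linarith [Set.mem_Iic.mp ha]

lemma glueVal_godelImp (hω : ω < 1) (a b : ℝ) :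
    (if glueVal ω a ≤ glueVal ω b then 1 else glueVal ω b) =
      glueVal ω (if a ≤ b then 1 else b) := by
  unfold glueVal; split_ifs <;> linarith

lemma glueVal_ciSup {ι : Type*} [Nonempty ι] {f : ι → ℝ} (hf : ∀ i, f i ≤ 1) :
    glueVal ω (⨆ i, f i) = ⨆ i, glueVal ω (f i) := by
  have hbdd : BddAbove (Set.range f) := ⟨1, Set.forall_mem_range.mpr hf⟩
  by_cases hsup : ⨆ i, f i ≤ ω
  · have hfix : ∀ i, glueVal ω (f i) = f i := fun i =>
      if_pos ((le_ciSup hbdd i).trans hsup)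
    rw [glueVal, if_pos hsup, iSup_congr hfix]
  · obtain ⟨i, hi⟩ := exists_lt_of_lt_ciSup (not_le.mp hsup)
    have hi1 : glueVal ω (f i) = 1 := if_neg (not_le.mpr hi)
    have hle1 (j : ι) : glueVal ω (f j) ≤ 1 := glueVal_le_one (hf j)
    rw [glueVal, if_neg hsup]
    exact le_antisymm (le_ciSup_of_le ⟨1, Set.forall_mem_range.mpr hle1⟩ i hi1.ge) (ciSup_le hle1)

end glueVal

section val

variable {L : Lang} {V : Set ℝ} (I : Interp L V) {n : ℕ}

lemma Form.val_all (A : Form L (n + 1)) (ρ : Fin n → I.Dom) :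
    Form.val I (.all A) ρ = ⨅ d, Form.val I A (Fin.snoc ρ d) :=
  congrArg sInf (Set.ext fun _ => exists_congr fun _ => eq_comm)

lemma Form.val_ex (A : Form L (n + 1)) (ρ : Fin n → I.Dom) :
    Form.val I (.ex A) ρ = ⨆ d, Form.val I A (Fin.snoc ρ d) :=
  congrArg sSup (Set.ext fun _ => exists_congr fun _ => eq_comm)

lemma Form.val_mem_Icc (hV : V ⊆ Set.Icc 0 1) (B : Form L n) (ρ : Fin n → I.Dom) :
    Form.val I B ρ ∈ Set.Icc (0 : ℝ) 1 := by
  have := I.dom_nonempty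
  induction B with
  | falsum => simp [Form.val]
  | atom R ts => exact hV (I.relVal_mem R _)
  | conj A B ihA ihB =>
    exact ⟨le_min (ihA ρ).1 (ihB ρ).1, min_le_of_left_le (ihA ρ).2⟩
  | disj A B ihA ihB =>
    exact ⟨le_max_of_le_left (ihA ρ).1, max_le (ihA ρ).2 (ihB ρ).2⟩
  | impl A B ihA ihB =>
    simp only [Form.val]; split_ifs
    exacts [⟨zero_le_one, le_rfl⟩, ihB ρ]
  | delta A ih =>
    simp only [Form.val]; split_ifs <;> simp
  | all A ih =>
    rw [Form.val_all]
    obtain ⟨d⟩ := I.dom_nonempty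
    exact ⟨le_ciInf fun e => (ih _).1,
      ciInf_le_of_le ⟨0, Set.forall_mem_range.mpr fun e => (ih _).1⟩ d (ih _).2⟩
  | ex A ih =>
    rw [Form.val_ex]
    obtain ⟨d⟩ := I.dom_nonempty
    exact ⟨le_ciSup_of_le ⟨1, Set.forall_mem_range.mpr fun e => (ih _).2⟩ d (ih _).1,
      ciSup_le fun e => (ih _).2⟩

lemma Term.eval_glue (ω : ℝ) (h1 : (1 : ℝ) ∈ V) {α : Type} (ρ : α → I.Dom) (t : Term L α) :
    Term.eval (I.glue ω h1) ρ t = Term.eval I ρ t := by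
  induction t with
  | var i => rfl
  | func g ts ih => exact congrArg (I.funMap g) (funext ih)

end val

/-- Gluing lemma for sentences without universal quantifiers:
`I_ω` is a `V`-interpretation (this is expressed by its type `Interp L V`), and
for every ∀-free formula `B` (a sentence with parameters, i.e. a formula
together with an assignment `ρ` of its free variables),
`I_ω(B) = I(B)` if `I(B) ≤ ω` and `I_ω(B) = 1` otherwise. -/
theorem stmt_1 {L : Lang} {V : Set ℝ} (hV : GodelSet V) (I : Interp L V)
    (ω : ℝ) (hω : ω ∈ Set.Ico (0:ℝ) 1) :
    ∀ {n : ℕ} (B : Form L n), DeltaFree B → AllFree B →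
      ∀ ρ : Fin n → I.Dom,
        Form.val (I.glue ω hV.2.2.2) B ρ =
          if Form.val I B ρ ≤ ω then Form.val I B ρ else 1 := by
  have hle {m : ℕ} (C : Form L m) (ρ : Fin m → I.Dom) : Form.val I C ρ ∈ Set.Iic 1 :=
    (Form.val_mem_Icc I hV.2.1 C ρ).2
  show ∀ {n} (B : Form L n), _ → _ → ∀ ρ, _ = glueVal ω (Form.val I B ρ)
  intro n B
  induction B with
  | falsum => exact fun _ _ _ => (if_pos hω.1).symm
  | atom R ts => intro _ _ ρ; simp only [Form.val, Term.eval_glue]; rfl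
  | conj A B ihA ihB =>
    rintro ⟨hΔA, hΔB⟩ ⟨hAA, hAB⟩ ρ
    simp only [Form.val, ihA hΔA hAA, ihB hΔB hAB]
    exact (monotoneOn_glueVal.map_min (hle A ρ) (hle B ρ)).symm
  | disj A B ihA ihB =>
    rintro ⟨hΔA, hΔB⟩ ⟨hAA, hAB⟩ ρ
    simp only [Form.val, ihA hΔA hAA, ihB hΔB hAB]
    exact (monotoneOn_glueVal.map_max (hle A ρ) (hle B ρ)).symm
  | impl A B ihA ihB =>
    rintro ⟨hΔA, hΔB⟩ ⟨hAA, hAB⟩ ρ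
    simp only [Form.val, ihA hΔA hAA, ihB hΔB hAB]
    exact glueVal_godelImp hω.2 _ _
  | delta A _ => exact fun hΔ => hΔ.elim
  | all A _ => exact fun _ hA => hA.elim
  | ex A ih =>
    intro hΔ hA ρ
    have := I.dom_nonempty
    rw [Form.val_ex (I.glue ω _) A ρ, Form.val_ex I A ρ]
    exact (iSup_congr fun d => ih hΔ hA _).trans
      (glueVal_ciSup (ι := I.Dom) fun d => hle A _).symm

end GodelPaper
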